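/- arXiv:1603.08714 — 10 statements merged into one kernel-verified Lean document; each statement's English description precedes it below -/
import Mathlib

section
/- A set E ⊆ 𝒜 is conflict-free in the underlying ABA framework (E does not attack E) if and only if E is <-conflict-free in the ABA+ framework (E does not <-attack E). -/
/-- A rule with a head and a (finite) body. A rule with empty body is a fact `head ← ⊤`. -/
structure ABARule (L : Type) where
  head : L
  body : List L

/-- Derivability (existence of a finite deduction tree) of a formula from a support set `S`
using rules in `Rs`: leaves are in `S` (or `⊤`, i.e. rules with empty body). -/
inductive Deduces {L : Type} (Rs : Set (ABARule L)) (S : Set L) : L → Prop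
  | assumption {φ : L} (h : φ ∈ S) : Deduces Rs S φ
  | rule {r : ABARule L} (hr : r ∈ Rs) (h : ∀ b ∈ r.body, Deduces Rs S b) :
      Deduces Rs S r.head

/-- An ABA⁺ framework: deductive system `(L, rules)`, non-empty set of assumptions,
total contrary map, and a preorder `le` on the assumptions. -/
structure ABAFramework (L : Type) where
  rules : Set (ABARule L)
  assumptions : Set L
  assumptions_nonempty : assumptions.Nonempty
  contrary : L → L
  le : L → L → Prop
  le_refl : ∀ a ∈ assumptions, le a a
  le_trans : ∀ a ∈ assumptions, ∀ b ∈ assumptions, ∀ c ∈ assumptions,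
      le a b → le b c → le a c

namespace ABAFramework

variable {L : Type}

/-- Strict part of the preference preorder. -/
def lt (F : ABAFramework L) (a b : L) : Prop := F.le a b ∧ ¬ F.le b a

/-- Standard (preference-free) ABA attack: some `A' ⊆ A` deduces the contrary of some `β ∈ B`. -/
def attacks (F : ABAFramework L) (A B : Set L) : Prop :=
  ∃ β ∈ B, ∃ A' ⊆ A, Deduces F.rules A' (F.contrary β)

/-- `<`-attack: normal attack or reverse attack. -/
def ltAttacks (F : ABAFramework L) (A B : Set L) : Prop :=
  (∃ β ∈ B, ∃ A' ⊆ A, Deduces F.rules A' (F.contrary β) ∧ ∀ α' ∈ A', ¬ F.lt α' β) ∨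
  (∃ α ∈ A, ∃ B' ⊆ B, Deduces F.rules B' (F.contrary α) ∧ ∃ β' ∈ B', F.lt β' α)

def conflictFree (F : ABAFramework L) (E : Set L) : Prop := ¬ F.attacks E E

def ltConflictFree (F : ABAFramework L) (E : Set L) : Prop := ¬ F.ltAttacks E E

def ltDefends (F : ABAFramework L) (E : Set L) (α : L) : Prop :=
  ∀ B ⊆ F.assumptions, F.ltAttacks B {α} → F.ltAttacks E B

def ltAdmissible (F : ABAFramework L) (E : Set L) : Prop :=
  E ⊆ F.assumptions ∧ F.ltConflictFree E ∧ ∀ α ∈ E, F.ltDefends E α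

def stable (F : ABAFramework L) (E : Set L) : Prop :=
  E ⊆ F.assumptions ∧ F.conflictFree E ∧
    ∀ β ∈ F.assumptions, β ∉ E → F.attacks E {β}

def ltStable (F : ABAFramework L) (E : Set L) : Prop :=
  E ⊆ F.assumptions ∧ F.ltConflictFree E ∧
    ∀ β ∈ F.assumptions, β ∉ E → F.ltAttacks E {β}

def ltComplete (F : ABAFramework L) (E : Set L) : Prop :=
  F.ltAdmissible E ∧ ∀ α ∈ F.assumptions, F.ltDefends E α → α ∈ E

def ltPreferred (F : ABAFramework L) (E : Set L) : Prop :=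
  F.ltAdmissible E ∧ ∀ E', F.ltAdmissible E' → E ⊆ E' → E' = E

def ltGrounded (F : ABAFramework L) (E : Set L) : Prop :=
  F.ltComplete E ∧ ∀ E', F.ltComplete E' → E' ⊆ E → E' = E

/-- `E` is `<`-admissible and contained in all `<`-preferred extensions. -/
def ltIdealCandidate (F : ABAFramework L) (E : Set L) : Prop :=
  F.ltAdmissible E ∧ ∀ P, F.ltPreferred P → E ⊆ P

def ltIdeal (F : ABAFramework L) (E : Set L) : Prop :=
  F.ltIdealCandidate E ∧ ∀ E', F.ltIdealCandidate E' → E ⊆ E' → E' = E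

/-- Flatness: no assumption is the head of any rule. -/
def Flat (F : ABAFramework L) : Prop := ∀ r ∈ F.rules, r.head ∉ F.assumptions

/-- Axiom of Contraposition. -/
def Contraposition (F : ABAFramework L) : Prop :=
  ∀ A' ⊆ F.assumptions, ∀ β ∈ F.assumptions,
    Deduces F.rules A' (F.contrary β) →
      ∀ α ∈ A', Deduces F.rules ((A' \ {α}) ∪ {β}) (F.contrary α)

/-- Axiom of Weak Contraposition. -/
def WeakContraposition (F : ABAFramework L) : Prop :=
  ∀ A' ⊆ F.assumptions, ∀ β ∈ F.assumptions,
    Deduces F.rules A' (F.contrary β) → (∃ α ∈ A', F.lt α β) →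
      ∃ α ∈ A', F.lt α β ∧ Deduces F.rules ((A' \ {α}) ∪ {β}) (F.contrary α)

/-- The `<`-defence operator `Def`. -/
def DefOp (F : ABAFramework L) (A : Set L) : Set L :=
  {α ∈ F.assumptions | F.ltDefends A α}

/-- Conclusions of a set `E`. -/
def Cn (F : ABAFramework L) (E : Set L) : Set L :=
  {φ | ∃ S ⊆ E, Deduces F.rules S φ}

end ABAFramework

open ABAFramework

theorem stmt2 {L : Type} (F : ABAFramework L) (E : Set L)
    (hE : E ⊆ F.assumptions) :
    F.conflictFree E ↔ F.ltConflictFree E := by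
  constructor
  · intro h hlt
    apply h
    rcases hlt with ⟨β, hβ, A', hA', hd, _⟩ | ⟨α, hα, B', hB', hd, _⟩
    · exact ⟨β, hβ, A', hA', hd⟩
    · exact ⟨α, hα, B', hB', hd⟩
  · intro h hat
    apply h
    rcases hat with ⟨β, hβ, A', hA', hd⟩
    by_cases hc : ∃ α' ∈ A', F.lt α' β
    · rcases hc with ⟨α', hα', hlt⟩
      exact Or.inr ⟨β, hβ, A', hA', hd, α', hα', hlt⟩
    · push_neg at hc
      exact Or.inl ⟨β, hβ, A', hA', hd, hc⟩
end

section
/- If the preference relation is the identity (empty strict part), then E ⊆ 𝒜 is a stable extension of the underlying ABA framework if and only if E is a <-stable extension of the ABA+ framework. -/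
open ABAFramework

theorem stmt4 {L : Type} (F : ABAFramework L)
    (hid : ∀ a ∈ F.assumptions, ∀ b ∈ F.assumptions, (F.le a b ↔ a = b))
    (E : Set L) (hE : E ⊆ F.assumptions) :
    F.stable E ↔ F.ltStable E := by
  have hlt : ∀ a ∈ F.assumptions, ∀ b ∈ F.assumptions, ¬ F.lt a b := by
    intro a ha b hb ⟨h1, h2⟩
    exact h2 ((hid b hb a ha).mpr ((hid a ha b hb).mp h1).symm)
  have key : ∀ A ⊆ F.assumptions, ∀ B ⊆ F.assumptions,
      (F.ltAttacks A B ↔ F.attacks A B) := by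
    intro A hA B hB
    constructor
    · rintro (⟨β, hβ, A', hA', hd, _⟩ | ⟨α, hα, B', hB', hd, β', hβ', hltβ⟩)
      · exact ⟨β, hβ, A', hA', hd⟩
      · exact absurd hltβ (hlt β' (hB (hB' hβ')) α (hA hα))
    · rintro ⟨β, hβ, A', hA', hd⟩
      exact Or.inl ⟨β, hβ, A', hA', hd, fun α' hα' => hlt α' (hA (hA' hα')) β (hB hβ)⟩
  constructor
  · rintro ⟨h1, h2, h3⟩
    refine ⟨h1, fun h => h2 ((key E hE E hE).mp h), fun β hβ hβE => ?_⟩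
    exact (key E hE {β} (by simpa using hβ)).mpr (h3 β hβ hβE)
  · rintro ⟨h1, h2, h3⟩
    refine ⟨h1, fun h => h2 ((key E hE E hE).mpr h), fun β hβ hβE => ?_⟩
    exact (key E hE {β} (by simpa using hβ)).mp (h3 β hβ hβE)
end

section
/- Every flat ABA+ framework satisfying the Axiom of Contraposition admits a unique <-grounded extension, namely the least fixed point of the <-defence operator Def. -/
/-!
The least fixed point `G` of `Def` is below every `<`-complete set, and it is itself `<`-complete
as soon as it is `<`-conflict-free; this gives existence and uniqueness of the `<`-grounded
extension. Conflict-freeness is the substance. Every `g ∈ G` is defended by members of `G` of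
smaller rank in the ordinal approximation of `G`. Given a finite attack `A ⊢ β̄` inside `G`,
Contraposition turns it into a normal `<`-attack `T \ {f} ⊢ f̄` on a `<`-minimal element `f` of
`T = A ∪ {β}`, and the defence of `f` yields a new attack inside `G` in which `f` is replaced by
assumptions of smaller rank. The multisets of ranks decrease in the well-founded
Dershowitz–Manna order.
-/

theorem Multiset.isDershowitzMannaLT_cons_of_le_add {α : Type*} [Preorder α]
    {M P K : Multiset α} {a : α} (hM : M ≤ P + K) (hK : ∀ k ∈ K, k < a) :
    M.IsDershowitzMannaLT (a ::ₘ P) := by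
  have hPK : (P + K).IsDershowitzMannaLT (a ::ₘ P) :=
    ⟨P, K, {a}, by simp, rfl, by rw [add_comm, Multiset.singleton_add],
      fun k hk => ⟨a, by simp, hK k hk⟩⟩
  obtain ⟨D, hD⟩ := Multiset.le_iff_exists_add.1 hM
  rcases eq_or_ne D 0 with rfl | hD0
  · simpa [hD] using hPK
  · refine Multiset.IsDershowitzMannaLT.trans ?_ (hD ▸ hPK)
    exact ⟨M, 0, D, by simpa using hD0, by simp, rfl, by simp⟩

namespace Deduces

variable {L : Type} {Rs : Set (ABARule L)}

theorem mono {S S' : Set L} (h : S ⊆ S') {φ : L} (hd : Deduces Rs S φ) : Deduces Rs S' φ := by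
  induction hd with
  | assumption hφ => exact .assumption (h hφ)
  | rule hr _ ih => exact .rule hr ih

theorem exists_finset_subset {S : Set L} {φ : L} (hd : Deduces Rs S φ) :
    ∃ U : Finset L, ↑U ⊆ S ∧ Deduces Rs ↑U φ := by
  classical
  induction hd with
  | @assumption φ hφ => exact ⟨{φ}, by simpa, .assumption (by simp)⟩
  | @rule r hr _ ih =>
    choose! U hUS hU using ih
    refine ⟨r.body.toFinset.biUnion U, ?_, .rule hr fun b hb => (hU b hb).mono ?_⟩
    · simpa using fun b hb => hUS b hb
    · exact fun x hx => Finset.mem_biUnion.2 ⟨b, List.mem_toFinset.2 hb, hx⟩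

end Deduces

namespace ABAFramework

variable {L : Type} (F : ABAFramework L)

theorem lt_irrefl (a : L) : ¬ F.lt a a := fun h => h.2 h.1

variable {F} in
theorem lt_trans {a b c : L} (ha : a ∈ F.assumptions) (hb : b ∈ F.assumptions)
    (hc : c ∈ F.assumptions) (hab : F.lt a b) (hbc : F.lt b c) : F.lt a c :=
  ⟨F.le_trans a ha b hb c hc hab.1 hbc.1, fun hca => hbc.2 (F.le_trans c hc a ha b hb hca hab.1)⟩

theorem exists_lt_minimal {T : Finset L} (hT : T.Nonempty) (hTA : ↑T ⊆ F.assumptions) :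
    ∃ f ∈ T, ∀ t ∈ T, ¬ F.lt t f := by
  let r : T → T → Prop := fun x y => F.lt x y
  have : IsTrans T r := ⟨fun x y z => lt_trans (hTA x.2) (hTA y.2) (hTA z.2)⟩
  have : Std.Irrefl r := ⟨fun x => F.lt_irrefl x⟩
  obtain ⟨t, ht⟩ := hT
  obtain ⟨f, -, hf⟩ := (Finite.wellFounded_of_trans_of_irrefl r).has_min Set.univ ⟨⟨t, ht⟩, trivial⟩
  exact ⟨f, f.2, fun t ht => hf ⟨t, ht⟩ trivial⟩

variable {F}

theorem ltAttacks_mono_left {A A' B : Set L} (h : A ⊆ A') (hAB : F.ltAttacks A B) :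
    F.ltAttacks A' B := by
  rcases hAB with ⟨β, hβ, C, hC, hd, hn⟩ | ⟨α, hα, C, hC, hd, hw⟩
  · exact .inl ⟨β, hβ, C, hC.trans h, hd, hn⟩
  · exact .inr ⟨α, h hα, C, hC, hd, hw⟩

theorem ltDefends_mono {E E' : Set L} (h : E ⊆ E') {α : L} (hα : F.ltDefends E α) :
    F.ltDefends E' α :=
  fun B hB hBα => ltAttacks_mono_left h (hα B hB hBα)

variable (F) in
theorem DefOp_mono : Monotone F.DefOp :=
  fun _ _ h _ hα => ⟨hα.1, ltDefends_mono h hα.2⟩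

variable (F) in
def defOpHom : Set L →o Set L := ⟨F.DefOp, F.DefOp_mono⟩

theorem attacks_self_of_ltAttacks_self {E : Set L} (h : F.ltAttacks E E) : F.attacks E E := by
  rcases h with ⟨β, hβ, A, hA, hd, -⟩ | ⟨α, hα, B, hB, hd, -⟩
  exacts [⟨β, hβ, A, hA, hd⟩, ⟨α, hα, B, hB, hd⟩]

theorem ltConflictFree_of_conflictFree {E : Set L} (h : F.conflictFree E) :
    F.ltConflictFree E :=
  fun hE => h (attacks_self_of_ltAttacks_self hE)

theorem ltComplete_iff {E : Set L} : F.ltComplete E ↔ F.ltConflictFree E ∧ F.DefOp E = E := by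
  constructor
  · rintro ⟨⟨hEA, hcf, hdef⟩, hclosed⟩
    exact ⟨hcf, Set.Subset.antisymm (fun α hα => hclosed α hα.1 hα.2)
      fun α hα => ⟨hEA hα, hdef α hα⟩⟩
  · rintro ⟨hcf, hfix⟩
    exact ⟨⟨fun α hα => (hfix.symm.subset hα).1, hcf, fun α hα => (hfix.symm.subset hα).2⟩,
      fun α hα hdef => hfix.subset ⟨hα, hdef⟩⟩

theorem Contraposition.deduces_erase_insert [DecidableEq L] (hcp : F.Contraposition)
    {A : Finset L} {β f : L} (hA : ↑A ⊆ F.assumptions) (hβ : β ∈ F.assumptions)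
    (hd : Deduces F.rules ↑A (F.contrary β)) (hf : f ∈ A) (hfβ : f ≠ β) :
    Deduces F.rules ↑((insert β A).erase f) (F.contrary f) := by
  refine (hcp _ hA β hβ hd f hf).mono fun x hx => ?_
  simp only [Set.mem_union, Set.mem_sdiff, Set.mem_singleton_iff, Finset.mem_coe] at hx
  simp only [Finset.coe_erase, Finset.coe_insert, Set.mem_sdiff, Set.mem_insert_iff,
    Finset.mem_coe, Set.mem_singleton_iff]
  rcases hx with ⟨hxA, hxf⟩ | rfl
  exacts [⟨.inr hxA, hxf⟩, ⟨.inl rfl, hfβ.symm⟩]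

section RankDescent

variable {ι : Type*} [Preorder ι] (rank : L → ι) {G : Set L}

-- `β` is counted even when `β ∈ A`: a self-attack `{β} ⊢ β̄` must outweigh its answers.
def attackRanks (A : Finset L) (β : L) : Multiset ι := rank β ::ₘ A.val.map rank

theorem exists_attack_of_lower_rank_defence
    (hG : G ⊆ F.assumptions) (hdef : ∀ g ∈ G, F.ltDefends {x ∈ G | rank x < rank g} g)
    {B : Finset L} {f : L} (hB : ↑B ⊆ G) (hf : f ∈ G)
    (hd : Deduces F.rules ↑B (F.contrary f)) (hmin : ∀ b ∈ B, ¬ F.lt b f) :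
    ∃ (A : Finset L) (ε : L), ↑A ⊆ G ∧ ε ∈ G ∧ Deduces F.rules ↑A (F.contrary ε) ∧
      (attackRanks rank A ε).IsDershowitzMannaLT (rank f ::ₘ B.val.map rank) := by
  have hBf : F.ltAttacks ↑B {f} := .inl ⟨f, rfl, ↑B, subset_rfl, hd, hmin⟩
  rcases hdef f hf ↑B (hB.trans hG) hBf with ⟨ε, hε, A', hA', hdA', -⟩ | ⟨e, he, B', hB', hdB', -⟩
  · obtain ⟨A, hAA', hdA⟩ := hdA'.exists_finset_subset
    have hA : ↑A ⊆ {x ∈ G | rank x < rank f} := hAA'.trans hA'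
    refine ⟨A, ε, fun x hx => (hA hx).1, hB hε, hdA,
      Multiset.isDershowitzMannaLT_cons_of_le_add (K := A.val.map rank) ?_ ?_⟩
    · rw [attackRanks, ← Multiset.singleton_add]
      exact add_le_add_left (Multiset.singleton_le.2 (Multiset.mem_map_of_mem _ hε)) _
    · simpa using fun x hx => (hA hx).2
  · obtain ⟨C, hCB', hdC⟩ := hdB'.exists_finset_subset
    have hCB : C ⊆ B := Finset.coe_subset.1 (hCB'.trans hB')
    refine ⟨C, e, fun x hx => hB (hCB hx), he.1, hdC,
      Multiset.isDershowitzMannaLT_cons_of_le_add (K := {rank e}) ?_ (by simpa using he.2)⟩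
    rw [attackRanks, ← Multiset.singleton_add, add_comm]
    exact add_le_add_left (Multiset.map_le_map (Finset.val_le_iff.2 hCB)) _

theorem exists_smaller_attack_of_mem (hcp : F.Contraposition) (hG : G ⊆ F.assumptions)
    (hdef : ∀ g ∈ G, F.ltDefends {x ∈ G | rank x < rank g} g) {A : Finset L} {β : L}
    (hA : ↑A ⊆ G) (hβ : β ∈ G) (hd : Deduces F.rules ↑A (F.contrary β)) (hβA : β ∈ A) :
    ∃ (A' : Finset L) (ε : L), ↑A' ⊆ G ∧ ε ∈ G ∧ Deduces F.rules ↑A' (F.contrary ε) ∧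
      (attackRanks rank A' ε).IsDershowitzMannaLT (attackRanks rank A β) := by
  classical
  by_cases hAβ : A = {β}
  · subst hAβ
    exact exists_attack_of_lower_rank_defence rank hG hdef hA hβ hd
      (by simpa using F.lt_irrefl β)
  -- Contraposition on some `t ≠ β` gives `A \ {t} ⊢ t̄`, whose ranks lack one copy of `rank β`.
  obtain ⟨t, htA, htβ⟩ : ∃ t ∈ A, t ≠ β := by
    by_contra! h
    exact hAβ (Finset.eq_singleton_iff_unique_mem.2 ⟨hβA, h⟩)
  have hdt := hcp.deduces_erase_insert (hA.trans hG) (hG hβ) hd htA htβ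
  rw [Finset.insert_eq_of_mem hβA] at hdt
  refine ⟨A.erase t, t, fun x hx => hA (Finset.mem_of_mem_erase hx), hA htA, hdt,
    Multiset.isDershowitzMannaLT_cons_of_le_add (K := 0) ?_ (by simp)⟩
  rw [attackRanks, Finset.erase_val, ← Multiset.map_cons,
    Multiset.cons_erase (Finset.mem_def.1 htA), add_zero]

theorem exists_smaller_attack_of_notMem (hcp : F.Contraposition) (hG : G ⊆ F.assumptions)
    (hdef : ∀ g ∈ G, F.ltDefends {x ∈ G | rank x < rank g} g) {A : Finset L} {β : L}
    (hA : ↑A ⊆ G) (hβ : β ∈ G) (hd : Deduces F.rules ↑A (F.contrary β)) (hβA : β ∉ A) :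
    ∃ (A' : Finset L) (ε : L), ↑A' ⊆ G ∧ ε ∈ G ∧ Deduces F.rules ↑A' (F.contrary ε) ∧
      (attackRanks rank A' ε).IsDershowitzMannaLT (attackRanks rank A β) := by
  classical
  set T := insert β A
  have hTG : ↑T ⊆ G := by rw [Finset.coe_insert]; exact Set.insert_subset hβ hA
  obtain ⟨f, hfT, hfmin⟩ := F.exists_lt_minimal (Finset.insert_nonempty β A) (hTG.trans hG)
  have hdf : Deduces F.rules ↑(T.erase f) (F.contrary f) := by
    rcases eq_or_ne f β with rfl | hfβ
    · rwa [Finset.erase_insert hβA]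
    · exact hcp.deduces_erase_insert (hA.trans hG) (hG hβ) hd
        ((Finset.mem_insert.1 hfT).resolve_left hfβ) hfβ
  have hranks : attackRanks rank A β = rank f ::ₘ (T.erase f).val.map rank := by
    rw [attackRanks, ← Multiset.map_cons, ← Finset.insert_val_of_notMem hβA, Finset.erase_val,
      ← Multiset.map_cons, Multiset.cons_erase (Finset.mem_def.1 hfT)]
  rw [hranks]
  exact exists_attack_of_lower_rank_defence rank hG hdef
    (fun x hx => hTG (Finset.mem_of_mem_erase hx)) (hTG hfT) hdf
    (fun b hb => hfmin b (Finset.mem_of_mem_erase hb))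

theorem exists_smaller_attack (hcp : F.Contraposition) (hG : G ⊆ F.assumptions)
    (hdef : ∀ g ∈ G, F.ltDefends {x ∈ G | rank x < rank g} g) {A : Finset L} {β : L}
    (hA : ↑A ⊆ G) (hβ : β ∈ G) (hd : Deduces F.rules ↑A (F.contrary β)) :
    ∃ (A' : Finset L) (ε : L), ↑A' ⊆ G ∧ ε ∈ G ∧ Deduces F.rules ↑A' (F.contrary ε) ∧
      (attackRanks rank A' ε).IsDershowitzMannaLT (attackRanks rank A β) := by
  by_cases hβA : β ∈ A
  exacts [exists_smaller_attack_of_mem rank hcp hG hdef hA hβ hd hβA,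
    exists_smaller_attack_of_notMem rank hcp hG hdef hA hβ hd hβA]

theorem conflictFree_of_lower_rank_defence [WellFoundedLT ι] (hcp : F.Contraposition)
    (hG : G ⊆ F.assumptions) (hdef : ∀ g ∈ G, F.ltDefends {x ∈ G | rank x < rank g} g) :
    F.conflictFree G := by
  rintro ⟨β₀, hβ₀, S, hS, hd₀⟩
  obtain ⟨A₀, hA₀S, hdA₀⟩ := hd₀.exists_finset_subset
  let attacksIn : Set (Finset L × L) :=
    {p | ↑p.1 ⊆ G ∧ p.2 ∈ G ∧ Deduces F.rules ↑p.1 (F.contrary p.2)}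
  obtain ⟨⟨A, β⟩, ⟨hA, hβ, hd⟩, hmin⟩ :=
    (InvImage.wf (fun p : Finset L × L => attackRanks rank p.1 p.2)
      Multiset.wellFounded_isDershowitzMannaLT).has_min attacksIn
      ⟨(A₀, β₀), hA₀S.trans hS, hβ₀, hdA₀⟩
  obtain ⟨A', ε, hA', hε, hd', hlt⟩ := exists_smaller_attack rank hcp hG hdef hA hβ hd
  exact hmin (A', ε) ⟨hA', hε, hd'⟩ hlt

end RankDescent

section Grounded

variable (F) in
noncomputable def defRank (x : L) : Ordinal :=
  sInf {o | x ∈ F.DefOp (OrdinalApprox.lfpApprox F.defOpHom ⊥ o)}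

theorem ltDefends_lower_defRank {g : L} (hg : g ∈ F.defOpHom.lfp) :
    F.ltDefends {x ∈ F.defOpHom.lfp | F.defRank x < F.defRank g} g := by
  have hfix : F.DefOp F.defOpHom.lfp = F.defOpHom.lfp := F.defOpHom.map_lfp
  have hne : ∃ o, g ∈ F.DefOp (OrdinalApprox.lfpApprox F.defOpHom ⊥ o) :=
    ⟨_, by rwa [OrdinalApprox.lfpApprox_ord_eq_lfp, hfix]⟩
  have hg' : g ∈ F.DefOp (OrdinalApprox.lfpApprox F.defOpHom ⊥ (F.defRank g)) := csInf_mem hne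
  refine ltDefends_mono (fun x hx => ?_) hg'.2
  refine ⟨?_, ?_⟩
  · exact OrdinalApprox.lfpApprox_le_of_mem_fixedPoints F.defOpHom hfix bot_le (F.defRank g) hx
  · rw [OrdinalApprox.lfpApprox] at hx
    simp only [Set.bot_eq_empty, Set.sup_eq_union, Set.iSup_eq_iUnion, Set.empty_union,
      Set.mem_iUnion] at hx
    obtain ⟨o, ho, hxo⟩ := hx
    exact (show F.defRank x ≤ o from csInf_le' hxo).trans_lt ho

theorem ltConflictFree_lfp_defOpHom (hcp : F.Contraposition) :
    F.ltConflictFree F.defOpHom.lfp := by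
  refine ltConflictFree_of_conflictFree
    (conflictFree_of_lower_rank_defence F.defRank hcp ?_ fun g hg => ltDefends_lower_defRank hg)
  rw [← F.defOpHom.map_lfp]
  exact fun x hx => hx.1

end Grounded

end ABAFramework

open ABAFramework

theorem stmt7_general {L : Type} (F : ABAFramework L)
    (hcp : F.Contraposition) :
    ∃ G : Set L, F.ltGrounded G ∧ (∀ G', F.ltGrounded G' → G' = G) ∧
      F.DefOp G = G ∧ (∀ X ⊆ F.assumptions, F.DefOp X = X → G ⊆ X) := by
  have hG : F.ltComplete F.defOpHom.lfp :=
    ltComplete_iff.2 ⟨ltConflictFree_lfp_defOpHom hcp, F.defOpHom.map_lfp⟩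
  have hleast : ∀ X, F.DefOp X = X → F.defOpHom.lfp ⊆ X := fun X hX => F.defOpHom.lfp_le_fixed hX
  have hmin : ∀ E, F.ltComplete E → F.defOpHom.lfp ⊆ E :=
    fun E hE => hleast E (ltComplete_iff.1 hE).2
  refine ⟨F.defOpHom.lfp, ⟨hG, fun E hE hEG => hEG.antisymm (hmin E hE)⟩, fun G' hG' => ?_,
    F.defOpHom.map_lfp, fun X _ hX => hleast X hX⟩
  exact (hG'.2 _ hG (hmin G' hG'.1)).symm

theorem stmt7 {L : Type} (F : ABAFramework L) (hflat : F.Flat)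
    (hcp : F.Contraposition) :
    ∃ G : Set L, F.ltGrounded G ∧ (∀ G', F.ltGrounded G' → G' = G) ∧
      F.DefOp G = G ∧ (∀ X ⊆ F.assumptions, F.DefOp X = X → G ⊆ X) :=
  stmt7_general F hcp
end

section
/- In any ABA+ framework, every <-stable extension is a <-preferred extension. -/
open ABAFramework

lemma ltAttacks_mono {L : Type} (F : ABAFramework L) {A A' B B' : Set L}
    (h : F.ltAttacks A B) (hA : A ⊆ A') (hB : B ⊆ B') : F.ltAttacks A' B' := by
  rcases h with ⟨β, hβ, S, hS, hd, hlt⟩ | ⟨a, ha, S, hS, hd, hlt⟩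
  · exact Or.inl ⟨β, hB hβ, S, fun x hx => hA (hS hx), hd, hlt⟩
  · exact Or.inr ⟨a, hA ha, S, fun x hx => hB (hS hx), hd, hlt⟩

theorem stmt10 {L : Type} (F : ABAFramework L) (E : Set L)
    (hE : F.ltStable E) : F.ltPreferred E := by
  obtain ⟨hsub, hcf, hatt⟩ := hE
  have hadm : F.ltAdmissible E := by
    refine ⟨hsub, hcf, fun α hα B hB hBatt => ?_⟩
    by_cases hBE : B ⊆ E
    · exact absurd (ltAttacks_mono F hBatt hBE (Set.singleton_subset_iff.mpr hα)) hcf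
    · obtain ⟨b, hbB, hbE⟩ := Set.not_subset.mp hBE
      exact ltAttacks_mono F (hatt b (hB hbB) hbE) (subset_refl E)
        (Set.singleton_subset_iff.mpr hbB)
  refine ⟨hadm, fun E' hE' hEE' => ?_⟩
  by_contra hne
  have : ¬ E' ⊆ E := fun h => hne (Set.Subset.antisymm h hEE')
  obtain ⟨α, hαE', hαE⟩ := Set.not_subset.mp this
  exact hE'.2.1 (ltAttacks_mono F (hatt α (hE'.1 hαE') hαE) hEE'
    (Set.singleton_subset_iff.mpr hαE'))
end

section
/- Every flat ABA+ framework satisfying the Axiom of Contraposition admits a unique <-ideal extension, i.e., a unique ⊆-maximal set that is <-admissible and contained in every <-preferred extension. -/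
namespace ABAFramework

variable {L : Type}

lemma deduces_mono {Rs : Set (ABARule L)} {S S' : Set L} {φ : L} (h : S ⊆ S')
    (hd : Deduces Rs S φ) : Deduces Rs S' φ := by
  induction hd with
  | assumption h' => exact .assumption (h h')
  | rule hr _ ih => exact .rule hr ih

lemma deduces_finite {Rs : Set (ABARule L)} {S : Set L} {φ : L}
    (h : Deduces Rs S φ) : ∃ T ⊆ S, T.Finite ∧ Deduces Rs T φ := by
  induction h with
  | @assumption φ h =>
    exact ⟨{φ}, by simpa using h, Set.finite_singleton _, .assumption rfl⟩
  | @rule r hr h ih =>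
    have ih' : ∀ b : L, ∃ T : Set L,
        b ∈ r.body → (T ⊆ S ∧ T.Finite ∧ Deduces Rs T b) := by
      intro b
      by_cases hb : b ∈ r.body
      · obtain ⟨T, h1, h2, h3⟩ := ih b hb
        exact ⟨T, fun _ => ⟨h1, h2, h3⟩⟩
      · exact ⟨∅, fun h => absurd h hb⟩
    choose T hT using ih'
    refine ⟨⋃ b ∈ {x | x ∈ r.body}, T b, ?_, ?_, ?_⟩
    · intro x hx
      simp only [Set.mem_iUnion] at hx
      obtain ⟨b, hb, hx⟩ := hx
      exact (hT b hb).1 hx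
    · exact (r.body.finite_toSet).biUnion fun b hb => (hT b hb).2.1
    · refine .rule hr fun b hb => ?_
      exact deduces_mono (Set.subset_biUnion_of_mem (u := fun b => T b) hb)
        (hT b hb).2.2

lemma ltAttacks_mono (F : ABAFramework L) {A A' B B' : Set L}
    (hA : A ⊆ A') (hB : B ⊆ B') (h : F.ltAttacks A B) : F.ltAttacks A' B' := by
  rcases h with ⟨β, hβ, C, hC, hd, hlt⟩ | ⟨α, hα, C, hC, hd, hlt⟩
  · exact Or.inl ⟨β, hB hβ, C, hC.trans hA, hd, hlt⟩
  · exact Or.inr ⟨α, hA hα, C, hC.trans hB, hd, hlt⟩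

lemma empty_ltAdmissible (F : ABAFramework L) : F.ltAdmissible ∅ := by
  refine ⟨Set.empty_subset _, ?_, fun α hα => absurd hα (Set.notMem_empty α)⟩
  rintro (⟨β, hβ, -⟩ | ⟨β, hβ, -⟩) <;> exact hβ

/-- key: an attack can always be based on a finite attacking subset within the attacker. -/
lemma ltAttacks_finite (F : ABAFramework L) {A B : Set L} (h : F.ltAttacks A B) :
    ∃ A₀ ⊆ A, A₀.Finite ∧ F.ltAttacks A₀ B := by
  rcases h with ⟨β, hβ, C, hC, hd, hlt⟩ | ⟨α, hα, C, hC, hd, ⟨β', hβ', hβlt⟩⟩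
  · obtain ⟨T, hTC, hTfin, hTd⟩ := deduces_finite hd
    exact ⟨T, hTC.trans hC, hTfin,
      Or.inl ⟨β, hβ, T, Set.Subset.rfl, hTd, fun a ha => hlt a (hTC ha)⟩⟩
  · exact ⟨{α}, by simpa using hα, Set.finite_singleton _,
      Or.inr ⟨α, rfl, C, hC, hd, β', hβ', hβlt⟩⟩

/-- symmetric: the attacked side can be shrunk to a finite subset. -/
lemma ltAttacks_finite_target (F : ABAFramework L) {A B : Set L} (h : F.ltAttacks A B) :
    ∃ B₀ ⊆ B, B₀.Finite ∧ F.ltAttacks A B₀ := by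
  rcases h with ⟨β, hβ, C, hC, hd, hlt⟩ | ⟨α, hα, C, hC, hd, ⟨β', hβ', hβlt⟩⟩
  · exact ⟨{β}, by simpa using hβ, Set.finite_singleton _,
      Or.inl ⟨β, rfl, C, hC, hd, hlt⟩⟩
  · obtain ⟨T, hTC, hTfin, hTd⟩ := deduces_finite hd
    refine ⟨T ∪ {β'}, ?_, hTfin.union (Set.finite_singleton _),
      Or.inr ⟨α, hα, T ∪ {β'}, Set.Subset.rfl,
        deduces_mono Set.subset_union_left hTd, β', Or.inr rfl, hβlt⟩⟩
    exact Set.union_subset (hTC.trans hC) (by simpa using hC hβ')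

/-- union of a chain of <-admissible sets is <-admissible. -/
lemma chain_union_ltAdmissible (F : ABAFramework L) {c : Set (Set L)}
    (hc : c ⊆ {E | F.ltAdmissible E}) (hchain : IsChain (· ⊆ ·) c)
    (hne : c.Nonempty) : F.ltAdmissible (⋃₀ c) := by
  have hdir : DirectedOn (fun i j : Set L => id i ⊆ id j) c := by
    intro x hx y hy
    rcases hchain.total hx hy with h | h
    · exact ⟨y, hy, h, Set.Subset.rfl⟩
    · exact ⟨x, hx, Set.Subset.rfl, h⟩
  have hfin : ∀ T : Set L, T.Finite → T ⊆ ⋃₀ c → ∃ E ∈ c, T ⊆ E := by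
    intro T hT hTc
    lift T to Finset L using hT
    have := hdir.exists_mem_subset_of_finset_subset_biUnion (f := id) hne
      (by simpa [Set.sUnion_eq_biUnion] using hTc)
    simpa using this
  refine ⟨?_, ?_, ?_⟩
  · exact Set.sUnion_subset fun E hE => (hc hE).1
  · intro hatt
    obtain ⟨A₀, hA₀, hA₀fin, hatt⟩ := F.ltAttacks_finite hatt
    obtain ⟨B₀, hB₀, hB₀fin, hatt⟩ := F.ltAttacks_finite_target hatt
    obtain ⟨E, hE, hsub⟩ := hfin (A₀ ∪ B₀) (hA₀fin.union hB₀fin)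
      (Set.union_subset hA₀ hB₀)
    exact (hc hE).2.1 (F.ltAttacks_mono (Set.subset_union_left.trans hsub)
      (Set.subset_union_right.trans hsub) hatt)
  · rintro α hα B hB hattB
    obtain ⟨E, hE, hαE⟩ := hα
    exact F.ltAttacks_mono (Set.subset_sUnion_of_mem hE) Set.Subset.rfl
      ((hc hE).2.2 α hαE B hB hattB)

/-- every <-admissible set is contained in some <-preferred extension. -/
lemma exists_ltPreferred (F : ABAFramework L) {A : Set L} (hA : F.ltAdmissible A) :
    ∃ P, F.ltPreferred P ∧ A ⊆ P := by
  obtain ⟨m, hAm, hm⟩ := zorn_subset_nonempty {E | F.ltAdmissible E}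
    (fun c hc hchain hne => ⟨⋃₀ c, F.chain_union_ltAdmissible hc hchain hne,
      fun s hs => Set.subset_sUnion_of_mem hs⟩) A hA
  exact ⟨m, ⟨hm.1, fun E' hE' hmE' => Set.Subset.antisymm (hm.2 hE' hmE') hmE'⟩, hAm⟩

end ABAFramework

open ABAFramework

theorem stmt12 {L : Type} (F : ABAFramework L) (hflat : F.Flat)
    (hcp : F.Contraposition) : ∃! I : Set L, F.ltIdeal I := by
  classical
  set C : Set (Set L) := {E | F.ltIdealCandidate E} with hC
  set U : Set L := ⋃₀ C with hU
  have hemptyC : (∅ : Set L) ∈ C := ⟨F.empty_ltAdmissible, fun _ _ => Set.empty_subset _⟩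
  obtain ⟨P, hP, -⟩ := F.exists_ltPreferred F.empty_ltAdmissible
  have hUP : ∀ Q, F.ltPreferred Q → U ⊆ Q := by
    intro Q hQ x hx
    obtain ⟨E, hE, hxE⟩ := hx
    exact hE.2 Q hQ hxE
  have hUadm : F.ltAdmissible U := by
    refine ⟨Set.sUnion_subset fun E hE => hE.1.1, ?_, ?_⟩
    · intro hatt
      exact hP.1.2.1 (F.ltAttacks_mono (hUP P hP) (hUP P hP) hatt)
    · rintro α ⟨E, hE, hαE⟩ B hB hattB
      exact F.ltAttacks_mono (Set.subset_sUnion_of_mem hE) Set.Subset.rfl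
        (hE.1.2.2 α hαE B hB hattB)
  have hUcand : F.ltIdealCandidate U := ⟨hUadm, hUP⟩
  refine ⟨U, ⟨hUcand, fun E' hE' hUE' =>
    Set.Subset.antisymm (Set.subset_sUnion_of_mem hE') hUE'⟩, ?_⟩
  rintro I ⟨hIcand, hImax⟩
  exact (hImax U hUcand (Set.subset_sUnion_of_mem hIcand)).symm
end

section
/- Conflict Preservation: for any ABA+ semantics σ, if E is a <-σ extension and α, β ∈ E, then {α} does not attack {β} in the underlying (preference-free) ABA framework. -/
open ABAFramework

theorem stmt14 {L : Type} (F : ABAFramework L) (E : Set L)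
    (hE : F.ltStable E ∨ F.ltComplete E ∨ F.ltPreferred E ∨
          F.ltGrounded E ∨ F.ltIdeal E)
    (α β : L) (hα : α ∈ E) (hβ : β ∈ E) :
    ¬ F.attacks {α} {β} := by
  have hcf : F.ltConflictFree E := by
    rcases hE with h | h | h | h | h
    · exact h.2.1
    · exact h.1.2.1
    · exact h.1.2.1
    · exact h.1.1.2.1
    · exact h.1.1.2.1
  rintro ⟨b, hb, A', hA', hded⟩
  rw [Set.mem_singleton_iff] at hb; subst hb
  have hA'E : A' ⊆ E := hA'.trans (by simpa using hα)
  by_cases hlt : ∃ a ∈ A', F.lt a b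
  · rcases hlt with ⟨a, ha, hab⟩
    exact hcf (Or.inr ⟨b, hβ, A', hA'E, hded, a, ha, hab⟩)
  · push_neg at hlt
    exact hcf (Or.inl ⟨b, hβ, A', hA'E, hded, hlt⟩)
end

section
/- Maximal Elements for <-stable semantics: if the preorder ≤ on assumptions is total and the set M = {α ∈ 𝒜 : there is no β ∈ 𝒜 with α < β} of ≤-maximal assumptions is <-conflict-free, then M ⊆ E for every <-stable extension E. -/
open ABAFramework

theorem stmt15 {L : Type} (F : ABAFramework L)
    (htotal : ∀ a ∈ F.assumptions, ∀ b ∈ F.assumptions, F.le a b ∨ F.le b a)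
    (hMcf : F.ltConflictFree {α ∈ F.assumptions | ¬ ∃ β ∈ F.assumptions, F.lt α β})
    (E : Set L) (hE : F.ltStable E) :
    {α ∈ F.assumptions | ¬ ∃ β ∈ F.assumptions, F.lt α β} ⊆ E := by
  intro α hα
  obtain ⟨hαA, hαmax⟩ := hα
  by_contra hαE
  obtain ⟨hEA, hcf, hst⟩ := hE
  rcases hst α hαA hαE with h | h
  · -- normal attack: attackers are all maximal, so M attacks itself
    obtain ⟨β, hβ, A', hA'E, hded, hnolt⟩ := h
    have hβα : β = α := hβ
    rw [hβα] at hded hnolt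
    apply hMcf
    left
    refine ⟨α, ⟨hαA, hαmax⟩, A', ?_, hded, hnolt⟩
    intro a haA'
    have haA : a ∈ F.assumptions := hEA (hA'E haA')
    have hle : F.le α a := by
      rcases htotal a haA α hαA with h1 | h1
      · by_contra h2
        exact hnolt a haA' ⟨h1, h2⟩
      · exact h1
    refine ⟨haA, ?_⟩
    rintro ⟨b, hbA, hab, hnba⟩
    exact hαmax ⟨b, hbA, F.le_trans α hαA a haA b hbA hle hab,
      fun hbα => hnba (F.le_trans b hbA α hαA a haA hbα hle)⟩
  · -- reverse attack: would mean α < a for some a, contradicting maximality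
    obtain ⟨a, haE, B', hB', hded, β', hβ'B', hlt⟩ := h
    have : β' = α := hB' hβ'B'
    subst this
    exact hαmax ⟨a, hEA haE, hlt⟩
end

section
/- Maximal Elements for <-complete semantics: if ≤ is total and the set M of ≤-maximal assumptions is <-conflict-free, then M ⊆ E for every <-complete extension E. -/
open ABAFramework

theorem stmt16 {L : Type} (F : ABAFramework L)
    (htotal : ∀ a ∈ F.assumptions, ∀ b ∈ F.assumptions, F.le a b ∨ F.le b a)
    (hMcf : F.ltConflictFree {α ∈ F.assumptions | ¬ ∃ β ∈ F.assumptions, F.lt α β})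
    (E : Set L) (hE : F.ltComplete E) :
    {α ∈ F.assumptions | ¬ ∃ β ∈ F.assumptions, F.lt α β} ⊆ E := by
  intro α hα
  obtain ⟨hαA, hmax⟩ := hα
  apply hE.2 α hαA
  intro B hB hatt
  exfalso
  rcases hatt with ⟨β, hβ, B', hB', hded, hnolt⟩ | ⟨a, ha, B'', hB'', hded, β', hβ', hlt⟩
  · -- normal attack on α: then M attacks M
    have hβα : β = α := hβ
    subst hβα
    apply hMcf
    left
    refine ⟨β, ⟨hαA, hmax⟩, B', ?_, hded, hnolt⟩
    intro b hb
    have hbA : b ∈ F.assumptions := hB (hB' hb)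
    have hαb : F.le β b := by
      rcases htotal b hbA β hαA with h | h
      · by_contra hc
        exact hnolt b hb ⟨h, hc⟩
      · exact h
    refine ⟨hbA, ?_⟩
    rintro ⟨γ, hγ, hbγ⟩
    apply hmax
    refine ⟨γ, hγ, F.le_trans β hαA b hbA γ hγ hαb hbγ.1, ?_⟩
    intro hγα
    exact hbγ.2 (F.le_trans γ hγ β hαA b hbA hγα hαb)
  · -- reverse attack: some β' ∈ B'' ⊆ {α} with β' < a, contradicting maximality
    have : β' = α := hB'' hβ'
    subst this
    exact hmax ⟨a, hB ha, hlt⟩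
end

section
/- Principle I for <-stable semantics: if E = E₀ ∪ {α} and E' = E₀ ∪ {α'} with α, α' ∉ E₀ and α' < α, then E and E' cannot both be <-stable extensions of the ABA+ framework. -/
open ABAFramework

theorem stmt17 {L : Type} (F : ABAFramework L) (E₀ : Set L) (α α' : L)
    (hα : α ∉ E₀) (hα' : α' ∉ E₀) (hpref : F.lt α' α) :
    ¬ (F.ltStable (E₀ ∪ {α}) ∧ F.ltStable (E₀ ∪ {α'})) := by
  rintro ⟨⟨hE1, hcf1, hatt1⟩, ⟨hE2, hcf2, hatt2⟩⟩
  have hne : α ≠ α' := by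
    rintro rfl; exact hpref.2 hpref.1
  have hαA : α ∈ F.assumptions := hE1 (Or.inr rfl)
  have hαnE' : α ∉ (E₀ ∪ {α'}) := by
    rintro (h | h)
    · exact hα h
    · exact hne h
  rcases hatt2 α hαA hαnE' with ⟨β, hβ, A', hA', hded, hno⟩ | ⟨a, ha, B', hB', hded, β', hβ', hlt⟩
  · have hβe : β = α := hβ
    subst β
    have hA'E : A' ⊆ E₀ ∪ {α} := by
      intro x hx
      rcases hA' hx with h | h
      · exact Or.inl h
      · rcases h with rfl; exact absurd hpref (hno _ hx)
    exact hcf1 (Or.inl ⟨α, Or.inr rfl, A', hA'E, hded, hno⟩)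
  · have hβe : β' = α := hB' hβ'
    subst β'
    rcases ha with ha | ha
    · exact hcf1 (Or.inr ⟨a, Or.inl ha, B', fun x hx => by have : x = α := hB' hx; subst x; exact Or.inr rfl,
        hded, α, hβ', hlt⟩)
    · have hae : a = α' := ha
      subst a
      exact hlt.2 hpref.1
end

section
/- In a flat ABA+ framework satisfying the Axiom of Weak Contraposition, if E is a <-stable extension and ψ ∈ Cn(E) ∩ 𝒜, then E \ {ψ} is a <-stable extension of the framework F' = (ℒ, ℛ ∪ {ψ ← ⊤}, 𝒜 \ {ψ}, ‾, ≤') obtained by confirming ψ as a fact and removing it from the assumptions (≤' being the restriction of ≤), and Cn'(E \ {ψ}) = Cn(E). -/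
open ABAFramework

/-!
Confirming `ψ` as a fact changes deductions only at their leaves: a leaf `ψ` can be replaced by
the fact `ψ ← ⊤`, and conversely the fact by a deduction of `ψ` from `E`. Hence `Cn` is unchanged
and attacks transfer in both directions. The one attack that does not transfer is a reverse
attack by `ψ` on some `β` with `{β} ⊢ ψ̄` and `β < ψ`; Weak Contraposition turns it into
`{ψ} ⊢ β̄`, which becomes `∅ ⊢ β̄` once `ψ` is a fact.
-/

namespace Deduces

variable {L : Type} {Rs : Set (ABARule L)} {S : Set L} {φ ψ : L}

theorem mono_support {S' : Set L} (hS : S ⊆ S') (h : Deduces Rs S φ) : Deduces Rs S' φ := by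
  induction h with
  | assumption h => exact assumption (hS h)
  | rule hr _ ih => exact rule hr ih

theorem mono_rules {Rs' : Set (ABARule L)} (hR : Rs ⊆ Rs') (h : Deduces Rs S φ) :
    Deduces Rs' S φ := by
  induction h with
  | assumption h => exact assumption h
  | rule hr _ ih => exact rule (hR hr) ih

theorem diff_of_insert_fact (h : Deduces Rs S φ) :
    Deduces (insert ⟨ψ, []⟩ Rs) (S \ {ψ}) φ := by
  induction h with
  | @assumption a h =>
    by_cases ha : a = ψ
    · subst ha
      exact rule (r := ⟨a, []⟩) (Set.mem_insert _ _) (by simp)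
    · exact assumption ⟨h, ha⟩
  | rule hr _ ih => exact rule (Set.mem_insert_of_mem _ hr) ih

theorem union_of_insert_fact {T : Set L} (h : Deduces (insert ⟨ψ, []⟩ Rs) S φ)
    (hψ : Deduces Rs T ψ) : Deduces Rs (S ∪ T) φ := by
  induction h with
  | assumption h => exact assumption (Or.inl h)
  | @rule r hr _ ih =>
    rcases hr with rfl | hr
    · exact hψ.mono_support Set.subset_union_right
    · exact rule hr ih

end Deduces

namespace ABAFramework

variable {L : Type} (F : ABAFramework L)

def confirm (ψ : L) (hne : (F.assumptions \ {ψ}).Nonempty) : ABAFramework L where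
  rules := insert ⟨ψ, []⟩ F.rules
  assumptions := F.assumptions \ {ψ}
  assumptions_nonempty := hne
  contrary := F.contrary
  le := F.le
  le_refl a ha := F.le_refl a ha.1
  le_trans a ha b hb c hc := F.le_trans a ha.1 b hb.1 c hc.1

variable {F}

theorem WeakContraposition.deduces_contrary_of_singleton (hwcp : F.WeakContraposition)
    {α β : L} (hα : α ∈ F.assumptions) (hβ : β ∈ F.assumptions)
    (hd : Deduces F.rules {β} (F.contrary α)) (hlt : F.lt β α) :
    Deduces F.rules {α} (F.contrary β) := by
  obtain ⟨γ, hγ, -, hded⟩ :=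
    hwcp {β} (Set.singleton_subset_iff.mpr hβ) α hα hd ⟨β, rfl, hlt⟩
  rw [Set.mem_singleton_iff] at hγ
  subst hγ
  simpa using hded

variable {E : Set L} {ψ : L} {hne : (F.assumptions \ {ψ}).Nonempty}

theorem cn_confirm (hψ : ψ ∈ F.Cn E) : (F.confirm ψ hne).Cn (E \ {ψ}) = F.Cn E := by
  obtain ⟨T, hTE, hT⟩ := hψ
  ext φ
  constructor
  · rintro ⟨S, hSE, hd⟩
    exact ⟨S ∪ T, Set.union_subset (hSE.trans Set.sdiff_subset) hTE,
      hd.union_of_insert_fact hT⟩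
  · rintro ⟨S, hSE, hd⟩
    exact ⟨S \ {ψ}, Set.sdiff_subset_sdiff_left hSE, hd.diff_of_insert_fact⟩

theorem ltConflictFree_confirm (hψ : ψ ∈ F.Cn E) (hcf : F.ltConflictFree E) :
    (F.confirm ψ hne).ltConflictFree (E \ {ψ}) := by
  obtain ⟨T, hTE, hT⟩ := hψ
  have hsub : ∀ {S : Set L}, S ⊆ E \ {ψ} → S ∪ T ⊆ E :=
    fun hS => Set.union_subset (hS.trans Set.sdiff_subset) hTE
  rintro (⟨β, hβ, A', hA', hd, -⟩ | ⟨α, hα, B', hB', hd, β', hβ', hlt⟩)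
  · -- the new fact may bring in assumptions below `β`, turning the attack into a reverse one
    by_cases hlow : ∃ γ ∈ A' ∪ T, F.lt γ β
    · exact hcf (Or.inr ⟨β, hβ.1, A' ∪ T, hsub hA', hd.union_of_insert_fact hT, hlow⟩)
    · exact hcf (Or.inl ⟨β, hβ.1, A' ∪ T, hsub hA', hd.union_of_insert_fact hT,
        fun γ hγ hγβ => hlow ⟨γ, hγ, hγβ⟩⟩)
  · exact hcf (Or.inr ⟨α, hα.1, B' ∪ T, hsub hB', hd.union_of_insert_fact hT,
      β', Or.inl hβ', hlt⟩)

theorem ltAttacks_confirm_singleton (hwcp : F.WeakContraposition) (hψ : ψ ∈ F.assumptions)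
    {β : L} (hβ : β ∈ F.assumptions) (hatt : F.ltAttacks E {β}) :
    (F.confirm ψ hne).ltAttacks (E \ {ψ}) {β} := by
  rcases hatt with ⟨_, rfl, A', hA', hd, hnl⟩ | ⟨α, hα, B', hB', hd, β', hβ', hlt⟩
  · exact Or.inl ⟨_, rfl, A' \ {ψ}, Set.sdiff_subset_sdiff_left hA', hd.diff_of_insert_fact,
      fun γ hγ => hnl γ hγ.1⟩
  by_cases hαψ : α = ψ
  · -- a reverse attack on the removed `ψ` becomes an unconditional attack on `β`
    subst hαψ
    obtain rfl : β' = β := hB' hβ'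
    obtain rfl : B' = {β'} := Set.eq_singleton_iff_unique_mem.mpr ⟨hβ', fun _ h => hB' h⟩
    have hd' := (hwcp.deduces_contrary_of_singleton hψ hβ hd hlt).diff_of_insert_fact (ψ := α)
    rw [Set.sdiff_self] at hd'
    exact Or.inl ⟨β', rfl, ∅, Set.empty_subset _, hd', fun _ h => h.elim⟩
  · exact Or.inr ⟨α, ⟨hα, hαψ⟩, B', hB', hd.mono_rules (Set.subset_insert _ _), β', hβ', hlt⟩

theorem ltStable_confirm (hwcp : F.WeakContraposition) (hE : F.ltStable E)
    (hψ : ψ ∈ F.Cn E ∩ F.assumptions) : (F.confirm ψ hne).ltStable (E \ {ψ}) := by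
  obtain ⟨hEA, hcf, hatt⟩ := hE
  refine ⟨Set.sdiff_subset_sdiff_left hEA, ltConflictFree_confirm hψ.1 hcf, ?_⟩
  rintro β ⟨hβ, hβψ⟩ hβE
  exact ltAttacks_confirm_singleton hwcp hψ.2 hβ (hatt β hβ fun h => hβE ⟨h, hβψ⟩)

end ABAFramework

theorem stmt19 {L : Type} (F : ABAFramework L) (hflat : F.Flat)
    (hwcp : F.WeakContraposition) (E : Set L) (ψ : L)
    (hE : F.ltStable E) (hψ : ψ ∈ F.Cn E ∩ F.assumptions)
    (hne : (F.assumptions \ {ψ}).Nonempty)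
    (F' : ABAFramework L)
    (hF' : F' = { rules := insert ⟨ψ, []⟩ F.rules,
                  assumptions := F.assumptions \ {ψ},
                  assumptions_nonempty := hne,
                  contrary := F.contrary,
                  le := F.le,
                  le_refl := fun a ha => F.le_refl a ha.1,
                  le_trans := fun a ha b hb c hc => F.le_trans a ha.1 b hb.1 c hc.1 }) :
    F'.ltStable (E \ {ψ}) ∧ F'.Cn (E \ {ψ}) = F.Cn E := by
  have hF'_eq : F' = F.confirm ψ hne := hF'
  subst hF'_eq
  exact ⟨ltStable_confirm hwcp hE hψ, cn_confirm hψ.1⟩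
end
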